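/- Proposition 2 (for the convolution-stride slicer): for every p ≥ 1 and all Borel probability measures μ, ν on ℝ^{c×d×d} with finite p-th moments, CSW-s_p(μ,ν) ≤ Max-SW_p(μ,ν) ≤ W_p(μ,ν), where Max-SW_p(μ,ν) = sup_{θ ∈ ℝ^{cd²}, ‖θ‖ ≤ 1} W_p(θ♯μ, θ♯ν) is the max-sliced Wasserstein distance of order p. -/

import Mathlib

/-!
A convolution-stride slicer is a linear functional of the image, and with unit kernels every
stage is non-expansive in ℓ²: a stride-2 convolution sees each pixel in exactly one 2 × 2
window, and on each window it is Cauchy–Schwarz against the unit kernel. So the slicer is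
`x ↦ ⟪θ, x⟫` for some `‖θ‖ ≤ 1` (Riesz), each sliced distance is one of the distances in the
supremum defining Max-SW, and averaging over the kernels gives the first inequality. For the
second, `x ↦ ⟪θ, x⟫` is 1-Lipschitz, so it pushes every coupling of `μ, ν` to a coupling of the
projections of no larger cost; the product coupling and the finite moments keep the costs finite.
-/

open MeasureTheory ENNReal

noncomputable section

/-- The set of couplings (transport plans) between two measures. -/
def couplings {E : Type*} [MeasurableSpace E] (μ ν : Measure E) : Set (Measure (E × E)) :=
  {π | π.map Prod.fst = μ ∧ π.map Prod.snd = ν}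

/-- The Wasserstein distance of order `p`:
`W_p(μ,ν) = (inf over couplings π of ∫ dist(x,y)^p dπ)^(1/p)`. -/
noncomputable def wassersteinDist {E : Type*} [MeasurableSpace E] [PseudoMetricSpace E]
    (p : ℝ) (μ ν : Measure E) : ℝ :=
  (⨅ π ∈ couplings μ ν, ∫⁻ q : E × E, ENNReal.ofReal (dist q.1 q.2 ^ p) ∂π).toReal ^ (1 / p)

/-- A measure has a finite `p`-th moment. -/
def FiniteMomentP {E : Type*} [MeasurableSpace E] [NormedAddCommGroup E] (p : ℝ)
    (μ : Measure E) : Prop :=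
  ∫⁻ x, ENNReal.ofReal (‖x‖ ^ p) ∂μ < ⊤

/-- Stride-2 convolution of a `c' × (2m) × (2m)` tensor with a `c' × 2 × 2` kernel (one output
channel): `Y i j = ∑ h, ∑ i', ∑ j', X h (2i+i') (2j+j') * K h i' j'`. -/
def convStride2 {c' : ℕ} (m : ℕ) (X : Fin c' → Fin (2 * m) → Fin (2 * m) → ℝ)
    (K : Fin c' → Fin 2 → Fin 2 → ℝ) (i j : Fin m) : ℝ :=
  ∑ h : Fin c', ∑ i' : Fin 2, ∑ j' : Fin 2,
    X h ⟨2 * i.1 + i'.1, by have h1 := i.isLt; have h2 := i'.isLt; omega⟩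
        ⟨2 * j.1 + j'.1, by have h1 := j.isLt; have h2 := j'.isLt; omega⟩ * K h i' j'

/-- Iterated stride-2 convolutions with single-channel `1 × 2 × 2` kernels, going from
spatial size `2^k * a` down to size `a`; `Ks 0` is applied first. -/
def midConv (a : ℕ) : (k : ℕ) → (Fin k → Fin 1 → Fin 2 → Fin 2 → ℝ) →
    (Fin (2 ^ k * a) → Fin (2 ^ k * a) → ℝ) → Fin a → Fin a → ℝ
  | 0, _, X, i, j => X (Fin.cast (by ring) i) (Fin.cast (by ring) j)
  | k + 1, Ks, X, i, j =>
      midConv a k (fun t => Ks t.succ)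
        (convStride2 (2 ^ k * a)
          (fun _ r s => X (Fin.cast (by ring) r) (Fin.cast (by ring) s))
          (Ks 0)) i j

/-- The space of `c × d × d` images, with the Euclidean (ℓ2) norm. -/
abbrev TensorSpace (c d : ℕ) := EuclideanSpace ℝ (Fin c × Fin d × Fin d)

/-- The convolution-stride slicer `CS-s(·|K^(1),…,K^(N))` with `N = M + 2` kernels, on images of
size `c × d × d` where `d = 2^(M+1) * a`: a stride-2 convolution with the `c × 2 × 2` kernel `K1`,
then `M` stride-2 convolutions with the `1 × 2 × 2` kernels `Ks`, then the inner product with the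
`1 × a × a` kernel `KN`. -/
def CSs (c a M : ℕ) (K1 : Fin c → Fin 2 → Fin 2 → ℝ)
    (Ks : Fin M → Fin 1 → Fin 2 → Fin 2 → ℝ) (KN : Fin 1 → Fin a → Fin a → ℝ)
    (X : TensorSpace c (2 ^ (M + 1) * a)) : ℝ :=
  ∑ i : Fin a, ∑ j : Fin a,
    midConv a M Ks
      (convStride2 (2 ^ M * a)
        (fun h r s => X (h, Fin.cast (by ring) r, Fin.cast (by ring) s)) K1) i j * KN 0 i j

/-- The uniform probability distribution on the unit sphere of `EuclideanSpace ℝ ι`. -/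
noncomputable def sphereUniform (ι : Type*) [Fintype ι] :
    Measure (Metric.sphere (0 : EuclideanSpace ℝ ι) 1) :=
  ((volume : Measure (EuclideanSpace ℝ ι)).toSphere Set.univ)⁻¹ •
    (volume : Measure (EuclideanSpace ℝ ι)).toSphere

/-- Sample space for the random kernels of the convolution-stride slicer: one kernel in the unit
sphere of `ℝ^{c×2×2}`, `M` kernels in the unit sphere of `ℝ^{1×2×2}`, and one kernel in the unit
sphere of `ℝ^{1×a×a}`. -/
abbrev KernelOmega (c a M : ℕ) :=
  Metric.sphere (0 : EuclideanSpace ℝ (Fin c × Fin 2 × Fin 2)) 1 ×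
    (Fin M → Metric.sphere (0 : EuclideanSpace ℝ (Fin 1 × Fin 2 × Fin 2)) 1) ×
    Metric.sphere (0 : EuclideanSpace ℝ (Fin 1 × Fin a × Fin a)) 1

/-- The joint law of the random kernels: independent, each uniformly distributed on the unit
sphere of its kernel space. -/
noncomputable def kernelMeasure (c a M : ℕ) : Measure (KernelOmega c a M) :=
  (sphereUniform (Fin c × Fin 2 × Fin 2)).prod
    ((Measure.pi fun _ : Fin M => sphereUniform (Fin 1 × Fin 2 × Fin 2)).prod
      (sphereUniform (Fin 1 × Fin a × Fin a)))

/-- View a point of `EuclideanSpace ℝ (α × β × γ)` as a curried kernel. -/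
def curry3 {α β γ : Type*} (x : EuclideanSpace ℝ (α × β × γ)) : α → β → γ → ℝ :=
  fun h i j => x (h, i, j)

/-- The convolution-stride slicer associated with a sample of the random kernels. -/
noncomputable def slicerOf (c a M : ℕ) (ω : KernelOmega c a M) :
    TensorSpace c (2 ^ (M + 1) * a) → ℝ :=
  CSs c a M (curry3 (ω.1 : EuclideanSpace ℝ (Fin c × Fin 2 × Fin 2)))
    (fun t => curry3 (ω.2.1 t : EuclideanSpace ℝ (Fin 1 × Fin 2 × Fin 2)))
    (curry3 (ω.2.2 : EuclideanSpace ℝ (Fin 1 × Fin a × Fin a)))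

/-- The convolution-stride sliced Wasserstein distance of order `p`:
`CSW-s_p(μ,ν) = (E[W_p^p(CS-s(·|K)♯μ, CS-s(·|K)♯ν)])^(1/p)`, the expectation being over the
random kernels. -/
noncomputable def CSWs (c a M : ℕ) (p : ℝ)
    (μ ν : Measure (TensorSpace c (2 ^ (M + 1) * a))) : ℝ :=
  (∫ ω, wassersteinDist p (μ.map (slicerOf c a M ω)) (ν.map (slicerOf c a M ω)) ^ p
    ∂(kernelMeasure c a M)) ^ (1 / p)

/-- The max-sliced Wasserstein distance of order `p`:
`Max-SW_p(μ,ν) = sup_{‖θ‖ ≤ 1} W_p(θ♯μ, θ♯ν)`, where `θ♯μ` is the pushforward of `μ` under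
`x ↦ ⟨θ, x⟩`. -/
noncomputable def maxSW {ι : Type*} [Fintype ι] (p : ℝ)
    (μ ν : Measure (EuclideanSpace ℝ ι)) : ℝ :=
  sSup {r : ℝ | ∃ θ : EuclideanSpace ℝ ι, ‖θ‖ ≤ 1 ∧
    r = wassersteinDist p (μ.map fun x => (inner ℝ θ x : ℝ))
          (ν.map fun x => (inner ℝ θ x : ℝ))}

open scoped RealInnerProductSpace

lemma ofReal_dist_rpow_le {E : Type*} [SeminormedAddCommGroup E] {p : ℝ} (hp : 1 ≤ p)
    (x y : E) :
    ENNReal.ofReal (dist x y ^ p) ≤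
      2 ^ (p - 1) * (ENNReal.ofReal (‖x‖ ^ p) + ENNReal.ofReal (‖y‖ ^ p)) := by
  have hp0 : 0 ≤ p := by linarith
  calc ENNReal.ofReal (dist x y ^ p) ≤ ENNReal.ofReal ((‖x‖ + ‖y‖) ^ p) :=
        ENNReal.ofReal_le_ofReal
          (Real.rpow_le_rpow dist_nonneg (dist_le_norm_add_norm x y) hp0)
    _ = (ENNReal.ofReal ‖x‖ + ENNReal.ofReal ‖y‖) ^ p := by
        rw [← ENNReal.ofReal_add (norm_nonneg _) (norm_nonneg _),
          ENNReal.ofReal_rpow_of_nonneg (by positivity) hp0]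
    _ ≤ 2 ^ (p - 1) * (ENNReal.ofReal ‖x‖ ^ p + ENNReal.ofReal ‖y‖ ^ p) :=
        ENNReal.rpow_add_le_mul_rpow_add_rpow _ _ hp
    _ = 2 ^ (p - 1) * (ENNReal.ofReal (‖x‖ ^ p) + ENNReal.ofReal (‖y‖ ^ p)) := by
        rw [ENNReal.ofReal_rpow_of_nonneg (norm_nonneg _) hp0,
          ENNReal.ofReal_rpow_of_nonneg (norm_nonneg _) hp0]

section Transport

variable {E F : Type*} [MeasurableSpace E] [MeasurableSpace F]

def transportCost [PseudoMetricSpace E] (p : ℝ) (μ ν : Measure E) : ℝ≥0∞ :=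
  ⨅ π ∈ couplings μ ν, ∫⁻ q : E × E, ENNReal.ofReal (dist q.1 q.2 ^ p) ∂π

lemma wassersteinDist_nonneg [PseudoMetricSpace E] (p : ℝ) (μ ν : Measure E) :
    0 ≤ wassersteinDist p μ ν :=
  Real.rpow_nonneg ENNReal.toReal_nonneg _

lemma map_prodMap_mem_couplings {μ ν : Measure E} {π : Measure (E × E)}
    (hπ : π ∈ couplings μ ν) {f : E → F} (hf : Measurable f) :
    π.map (Prod.map f f) ∈ couplings (μ.map f) (ν.map f) := by
  constructor
  · rw [Measure.map_map measurable_fst (hf.prodMap hf), ← hπ.1,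
      Measure.map_map hf measurable_fst]
    rfl
  · rw [Measure.map_map measurable_snd (hf.prodMap hf), ← hπ.2,
      Measure.map_map hf measurable_snd]
    rfl

variable [PseudoMetricSpace F]

lemma transportCost_map_le [PseudoMetricSpace E] {p : ℝ} (hp : 0 ≤ p) {f : E → F}
    (hf : LipschitzWith 1 f) (hfm : Measurable f) (μ ν : Measure E) :
    transportCost p (μ.map f) (ν.map f) ≤ transportCost p μ ν := by
  refine le_iInf₂ fun π hπ => (iInf₂_le _ (map_prodMap_mem_couplings hπ hfm)).trans ?_
  refine (lintegral_map_le _ _).trans (lintegral_mono fun q => ?_)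
  have hdist : dist (f q.1) (f q.2) ≤ dist q.1 q.2 := by
    simpa using hf.dist_le_mul q.1 q.2
  exact ENNReal.ofReal_le_ofReal (Real.rpow_le_rpow dist_nonneg hdist hp)

lemma wassersteinDist_map_le [PseudoMetricSpace E] {p : ℝ} (hp : 0 ≤ p) {f : E → F}
    (hf : LipschitzWith 1 f) (hfm : Measurable f) {μ ν : Measure E}
    (hμν : transportCost p μ ν ≠ ∞) :
    wassersteinDist p (μ.map f) (ν.map f) ≤ wassersteinDist p μ ν :=
  Real.rpow_le_rpow ENNReal.toReal_nonneg
    (ENNReal.toReal_mono hμν (transportCost_map_le hp hf hfm μ ν)) (by positivity)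

lemma transportCost_lt_top [NormedAddCommGroup E] [OpensMeasurableSpace E] {p : ℝ}
    (hp : 1 ≤ p) {μ ν : Measure E} [IsProbabilityMeasure μ] [IsProbabilityMeasure ν]
    (hμ : FiniteMomentP p μ) (hν : FiniteMomentP p ν) :
    transportCost p μ ν < ∞ := by
  have hprod : μ.prod ν ∈ couplings μ ν := ⟨by simp, by simp⟩
  have hmom : Measurable fun x : E => ENNReal.ofReal (‖x‖ ^ p) := by fun_prop
  have hconst : (2 : ℝ≥0∞) ^ (p - 1) < ∞ :=
    ENNReal.rpow_lt_top_of_nonneg (by linarith) ENNReal.ofNat_ne_top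
  calc transportCost p μ ν ≤ ∫⁻ q : E × E, ENNReal.ofReal (dist q.1 q.2 ^ p) ∂(μ.prod ν) :=
        iInf₂_le _ hprod
    _ ≤ ∫⁻ q : E × E, 2 ^ (p - 1) *
          (ENNReal.ofReal (‖q.1‖ ^ p) + ENNReal.ofReal (‖q.2‖ ^ p)) ∂(μ.prod ν) :=
        lintegral_mono fun q => ofReal_dist_rpow_le hp q.1 q.2
    _ = 2 ^ (p - 1) * ((∫⁻ x, ENNReal.ofReal (‖x‖ ^ p) ∂μ) +
          ∫⁻ y, ENNReal.ofReal (‖y‖ ^ p) ∂ν) := by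
        rw [lintegral_const_mul _ (by fun_prop), lintegral_add_left (by fun_prop),
          ← lintegral_map hmom measurable_fst, ← lintegral_map hmom measurable_snd]
        simp
    _ < ∞ := ENNReal.mul_lt_top hconst (ENNReal.add_lt_top.2 ⟨hμ, hν⟩)

end Transport

section MaxSliced

variable {ι : Type*} [Fintype ι] {p : ℝ} {μ ν : Measure (EuclideanSpace ℝ ι)}
  [IsProbabilityMeasure μ] [IsProbabilityMeasure ν]

lemma wassersteinDist_map_inner_le (hp : 1 ≤ p) (hμ : FiniteMomentP p μ)
    (hν : FiniteMomentP p ν) {θ : EuclideanSpace ℝ ι} (hθ : ‖θ‖ ≤ 1) :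
    wassersteinDist p (μ.map fun x => ⟪θ, x⟫) (ν.map fun x => ⟪θ, x⟫) ≤
      wassersteinDist p μ ν := by
  have hlip : LipschitzWith 1 fun x : EuclideanSpace ℝ ι => ⟪θ, x⟫ :=
    (innerSL ℝ θ).lipschitz.weaken (by rw [← NNReal.coe_le_coe]; simpa using hθ)
  exact wassersteinDist_map_le (by linarith) hlip (by fun_prop)
    (transportCost_lt_top hp hμ hν).ne

lemma maxSW_le_wassersteinDist (hp : 1 ≤ p) (hμ : FiniteMomentP p μ)
    (hν : FiniteMomentP p ν) : maxSW p μ ν ≤ wassersteinDist p μ ν :=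
  Real.sSup_le (by rintro _ ⟨θ, hθ, rfl⟩; exact wassersteinDist_map_inner_le hp hμ hν hθ)
    (wassersteinDist_nonneg p μ ν)

lemma wassersteinDist_map_inner_le_maxSW (hp : 1 ≤ p) (hμ : FiniteMomentP p μ)
    (hν : FiniteMomentP p ν) {θ : EuclideanSpace ℝ ι} (hθ : ‖θ‖ ≤ 1) :
    wassersteinDist p (μ.map fun x => ⟪θ, x⟫) (ν.map fun x => ⟪θ, x⟫) ≤ maxSW p μ ν :=
  le_csSup ⟨wassersteinDist p μ ν, by
    rintro _ ⟨θ, hθ, rfl⟩; exact wassersteinDist_map_inner_le hp hμ hν hθ⟩ ⟨θ, hθ, rfl⟩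

end MaxSliced

lemma sum_fin_two_mul {R : Type*} [AddCommMonoid R] (m : ℕ) (f : Fin (2 * m) → R) :
    ∑ r, f r = ∑ i : Fin m, ∑ i' : Fin 2,
      f ⟨2 * i.1 + i'.1, by have := i.isLt; have := i'.isLt; omega⟩ := by
  rw [← (finProdFinEquiv.trans (finCongr (mul_comm m 2))).sum_comp, Fintype.sum_prod_type]
  refine Finset.sum_congr rfl fun i _ => Finset.sum_congr rfl fun i' _ => ?_
  congr 1
  ext
  simp [finProdFinEquiv, add_comm]

lemma sum_sum_finCast {R : Type*} [AddCommMonoid R] {n n' : ℕ} (h : n = n')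
    (f : Fin n' → Fin n' → R) :
    ∑ i, ∑ j, f (Fin.cast h i) (Fin.cast h j) = ∑ r, ∑ s, f r s :=
  (Fin.sum_congr' (fun r => ∑ j, f r (Fin.cast h j)) h).trans
    (Finset.sum_congr rfl fun r _ => Fin.sum_congr' (f r) h)

lemma sq_sum_mul_le_sum_sq {ι : Type*} [Fintype ι] (x y : ι → ℝ) (hy : ∑ i, y i ^ 2 ≤ 1) :
    (∑ i, x i * y i) ^ 2 ≤ ∑ i, x i ^ 2 :=
  (Finset.sum_mul_sq_le_sq_mul_sq _ x y).trans
    (mul_le_of_le_one_right (Finset.sum_nonneg fun _ _ => sq_nonneg _) hy)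

section Convolution

variable {c' : ℕ} (m : ℕ)

lemma convStride2_add (X Y : Fin c' → Fin (2 * m) → Fin (2 * m) → ℝ)
    (K : Fin c' → Fin 2 → Fin 2 → ℝ) :
    convStride2 m (fun h r s => X h r s + Y h r s) K = convStride2 m X K + convStride2 m Y K := by
  ext i j
  simp only [convStride2, Pi.add_apply, add_mul, Finset.sum_add_distrib]

lemma convStride2_smul (t : ℝ) (X : Fin c' → Fin (2 * m) → Fin (2 * m) → ℝ)
    (K : Fin c' → Fin 2 → Fin 2 → ℝ) :
    convStride2 m (fun h r s => t * X h r s) K = t • convStride2 m X K := by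
  ext i j
  simp only [convStride2, Pi.smul_apply, smul_eq_mul, Finset.mul_sum, mul_assoc]

lemma sum_sq_convStride2_le (X : Fin c' → Fin (2 * m) → Fin (2 * m) → ℝ)
    (K : Fin c' → Fin 2 → Fin 2 → ℝ) (hK : ∑ h, ∑ i', ∑ j', K h i' j' ^ 2 ≤ 1) :
    ∑ i, ∑ j, convStride2 m X K i j ^ 2 ≤ ∑ h, ∑ r, ∑ s, X h r s ^ 2 := by
  have hwindow : ∀ i j : Fin m, convStride2 m X K i j ^ 2 ≤ ∑ h, ∑ i' : Fin 2, ∑ j' : Fin 2,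
      X h ⟨2 * i.1 + i'.1, by have := i.isLt; have := i'.isLt; omega⟩
        ⟨2 * j.1 + j'.1, by have := j.isLt; have := j'.isLt; omega⟩ ^ 2 := by
    intro i j
    have := sq_sum_mul_le_sum_sq
      (fun q : Fin c' × Fin 2 × Fin 2 =>
        X q.1 ⟨2 * i.1 + q.2.1.1, by have := i.isLt; have := q.2.1.isLt; omega⟩
          ⟨2 * j.1 + q.2.2.1, by have := j.isLt; have := q.2.2.isLt; omega⟩)
      (fun q => K q.1 q.2.1 q.2.2) (by simpa only [Fintype.sum_prod_type] using hK)
    simpa only [convStride2, Fintype.sum_prod_type] using this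
  refine (Finset.sum_le_sum fun i _ => Finset.sum_le_sum fun j _ => hwindow i j).trans_eq ?_
  simp_rw [sum_fin_two_mul m]
  exact (Finset.sum_congr rfl fun _ _ => Finset.sum_comm).trans <| Finset.sum_comm.trans <|
    Finset.sum_congr rfl fun _ _ => Finset.sum_congr rfl fun _ _ => Finset.sum_comm

end Convolution

section MidConv

variable (a : ℕ)

lemma midConv_succ (k : ℕ) (Ks : Fin (k + 1) → Fin 1 → Fin 2 → Fin 2 → ℝ)
    (X : Fin (2 ^ (k + 1) * a) → Fin (2 ^ (k + 1) * a) → ℝ) :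
    midConv a (k + 1) Ks X = midConv a k (fun t => Ks t.succ)
      (convStride2 (2 ^ k * a)
        (fun _ r s => X (Fin.cast (by ring) r) (Fin.cast (by ring) s)) (Ks 0)) :=
  rfl

lemma midConv_add (k : ℕ) (Ks : Fin k → Fin 1 → Fin 2 → Fin 2 → ℝ)
    (X Y : Fin (2 ^ k * a) → Fin (2 ^ k * a) → ℝ) :
    midConv a k Ks (X + Y) = midConv a k Ks X + midConv a k Ks Y := by
  induction k with
  | zero => rfl
  | succ k ih =>
    simp only [midConv_succ, Pi.add_apply]
    rw [convStride2_add, ih]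

lemma midConv_smul (k : ℕ) (Ks : Fin k → Fin 1 → Fin 2 → Fin 2 → ℝ) (t : ℝ)
    (X : Fin (2 ^ k * a) → Fin (2 ^ k * a) → ℝ) :
    midConv a k Ks (t • X) = t • midConv a k Ks X := by
  induction k with
  | zero => rfl
  | succ k ih =>
    simp only [midConv_succ, Pi.smul_apply, smul_eq_mul]
    rw [convStride2_smul, ih]

lemma sum_sq_midConv_le (k : ℕ) (Ks : Fin k → Fin 1 → Fin 2 → Fin 2 → ℝ)
    (hKs : ∀ t, ∑ h, ∑ i', ∑ j', Ks t h i' j' ^ 2 ≤ 1)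
    (X : Fin (2 ^ k * a) → Fin (2 ^ k * a) → ℝ) :
    ∑ i, ∑ j, midConv a k Ks X i j ^ 2 ≤ ∑ r, ∑ s, X r s ^ 2 := by
  induction k with
  | zero => exact (sum_sum_finCast _ fun r s => X r s ^ 2).le
  | succ k ih =>
    refine (ih _ (fun t => hKs t.succ) _).trans ?_
    refine (sum_sq_convStride2_le _ _ _ (hKs 0)).trans_eq ?_
    rw [Fin.sum_univ_one]
    exact sum_sum_finCast _ fun r s => X r s ^ 2

end MidConv

lemma sum_sq_curry3 {α β γ : Type*} [Fintype α] [Fintype β] [Fintype γ]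
    (x : EuclideanSpace ℝ (α × β × γ)) :
    ∑ h, ∑ i, ∑ j, curry3 x h i j ^ 2 = ‖x‖ ^ 2 := by
  simp [EuclideanSpace.norm_sq_eq, Fintype.sum_prod_type, curry3]

section Slicer

variable (c a M : ℕ) (K1 : Fin c → Fin 2 → Fin 2 → ℝ)
  (Ks : Fin M → Fin 1 → Fin 2 → Fin 2 → ℝ) (KN : Fin 1 → Fin a → Fin a → ℝ)

def CSsₗ : TensorSpace c (2 ^ (M + 1) * a) →ₗ[ℝ] ℝ where
  toFun := CSs c a M K1 Ks KN
  map_add' X Y := by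
    simp only [CSs, PiLp.add_apply, convStride2_add, midConv_add, Pi.add_apply, add_mul,
      Finset.sum_add_distrib]
  map_smul' t X := by
    simp only [CSs, PiLp.smul_apply, smul_eq_mul, convStride2_smul, midConv_smul,
      Pi.smul_apply, Finset.mul_sum, mul_assoc, RingHom.id_apply]

lemma abs_CSs_le (hK1 : ∑ h, ∑ i', ∑ j', K1 h i' j' ^ 2 ≤ 1)
    (hKs : ∀ t, ∑ h, ∑ i', ∑ j', Ks t h i' j' ^ 2 ≤ 1)
    (hKN : ∑ h, ∑ i, ∑ j, KN h i j ^ 2 ≤ 1) (X : TensorSpace c (2 ^ (M + 1) * a)) :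
    |CSs c a M K1 Ks KN X| ≤ ‖X‖ := by
  set B := midConv a M Ks (convStride2 (2 ^ M * a)
    (fun h r s => X (h, Fin.cast (by ring) r, Fin.cast (by ring) s)) K1)
  have hCS := sq_sum_mul_le_sum_sq (fun q : Fin a × Fin a => B q.1 q.2)
    (fun q => KN 0 q.1 q.2) (by simpa [Fintype.sum_prod_type] using hKN)
  simp only [Fintype.sum_prod_type] at hCS
  refine abs_le_of_sq_le_sq (hCS.trans ((sum_sq_midConv_le a M Ks hKs _).trans
    ((sum_sq_convStride2_le _ _ K1 hK1).trans_eq ?_))) (norm_nonneg X)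
  rw [← sum_sq_curry3 X]
  exact Finset.sum_congr rfl fun h _ => sum_sum_finCast _ fun r s => X (h, r, s) ^ 2

end Slicer

lemma exists_norm_le_one_forall_inner_eq {E : Type*} [NormedAddCommGroup E]
    [InnerProductSpace ℝ E] [CompleteSpace E] (f : E →ₗ[ℝ] ℝ) (hf : ∀ x, |f x| ≤ ‖x‖) :
    ∃ θ : E, ‖θ‖ ≤ 1 ∧ ∀ x, f x = ⟪θ, x⟫ := by
  let ℓ := f.mkContinuous 1 fun x => by simpa using hf x
  refine ⟨(InnerProductSpace.toDual ℝ E).symm ℓ, ?_, fun x => ?_⟩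
  · rw [LinearIsometryEquiv.norm_map]
    exact LinearMap.mkContinuous_norm_le f zero_le_one _
  · rw [InnerProductSpace.toDual_symm_apply]
    rfl

lemma exists_inner_eq_slicerOf {c a M : ℕ} (ω : KernelOmega c a M) :
    ∃ θ, ‖θ‖ ≤ 1 ∧ slicerOf c a M ω = fun x => ⟪θ, x⟫ := by
  have hunit {α β γ : Type} [Fintype α] [Fintype β] [Fintype γ]
      (x : Metric.sphere (0 : EuclideanSpace ℝ (α × β × γ)) 1) :
      ∑ h, ∑ i, ∑ j, curry3 (x : EuclideanSpace ℝ (α × β × γ)) h i j ^ 2 ≤ 1 := by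
    simp [sum_sq_curry3]
  obtain ⟨θ, hθ, hinner⟩ := exists_norm_le_one_forall_inner_eq (CSsₗ c a M _ _ _)
    (abs_CSs_le c a M _ _ _ (hunit ω.1) (fun t => hunit (ω.2.1 t)) (hunit ω.2.2))
  exact ⟨θ, hθ, funext hinner⟩

instance isProbabilityMeasure_sphereUniform (ι : Type*) [Fintype ι] [Nonempty ι] :
    IsProbabilityMeasure (sphereUniform ι) := by
  constructor
  rw [sphereUniform, Measure.smul_apply, smul_eq_mul]
  refine ENNReal.inv_mul_cancel ?_ (measure_ne_top _ _)
  rw [Measure.toSphere_apply_univ]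
  exact mul_ne_zero (by simp [finrank_euclideanSpace])
    (Metric.measure_ball_pos volume 0 one_pos).ne'

instance isProbabilityMeasure_kernelMeasure (c a M : ℕ) [NeZero c] [NeZero a] :
    IsProbabilityMeasure (kernelMeasure c a M) := by
  unfold kernelMeasure
  infer_instance

lemma rpow_integral_rpow_le {Ω : Type*} [MeasurableSpace Ω] (P : Measure Ω)
    [IsProbabilityMeasure P] {p : ℝ} (hp : 0 < p) {g : Ω → ℝ} {C : ℝ}
    (hg0 : ∀ ω, 0 ≤ g ω) (hgC : ∀ ω, g ω ≤ C) :
    (∫ ω, g ω ^ p ∂P) ^ (1 / p) ≤ C := by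
  obtain ⟨ω₀⟩ := nonempty_of_isProbabilityMeasure P
  have hC : 0 ≤ C := (hg0 ω₀).trans (hgC ω₀)
  have hint : ∫ ω, g ω ^ p ∂P ≤ C ^ p := by
    calc ∫ ω, g ω ^ p ∂P ≤ ∫ _, C ^ p ∂P :=
          integral_mono_of_nonneg (ae_of_all _ fun ω => Real.rpow_nonneg (hg0 ω) p)
            (integrable_const _)
            (ae_of_all _ fun ω => Real.rpow_le_rpow (hg0 ω) (hgC ω) hp.le)
      _ = C ^ p := by simp
  calc (∫ ω, g ω ^ p ∂P) ^ (1 / p) ≤ (C ^ p) ^ (1 / p) :=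
        Real.rpow_le_rpow (integral_nonneg fun ω => Real.rpow_nonneg (hg0 ω) p) hint
          (by positivity)
    _ = C := by rw [one_div, Real.rpow_rpow_inv hC hp.ne']

/-- Proposition 2 (for the convolution-stride slicer): for every `p ≥ 1` and all Borel
probability measures on `ℝ^{c×d×d}` (with `d = 2^(M+1)·a`) with finite `p`-th moments,
`CSW-s_p(μ,ν) ≤ Max-SW_p(μ,ν) ≤ W_p(μ,ν)`. -/
theorem CSWs_le_maxSW_le_wassersteinDist (c a M : ℕ) (hc : 1 ≤ c) (ha : 1 ≤ a)
    (p : ℝ) (hp : 1 ≤ p)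
    (μ ν : Measure (TensorSpace c (2 ^ (M + 1) * a)))
    [IsProbabilityMeasure μ] [IsProbabilityMeasure ν]
    (hμ : FiniteMomentP p μ) (hν : FiniteMomentP p ν) :
    CSWs c a M p μ ν ≤ maxSW p μ ν ∧ maxSW p μ ν ≤ wassersteinDist p μ ν := by
  have : NeZero c := ⟨by omega⟩
  have : NeZero a := ⟨by omega⟩
  have hslice (ω : KernelOmega c a M) :
      wassersteinDist p (μ.map (slicerOf c a M ω)) (ν.map (slicerOf c a M ω)) ≤ maxSW p μ ν := by
    obtain ⟨θ, hθ, hθω⟩ := exists_inner_eq_slicerOf ω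
    rw [hθω]
    exact wassersteinDist_map_inner_le_maxSW hp hμ hν hθ
  exact ⟨rpow_integral_rpow_le _ (by linarith) (fun _ => wassersteinDist_nonneg _ _ _) hslice,
    maxSW_le_wassersteinDist hp hμ hν⟩

end
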